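/- If P_LoS(θ(h)) ≥ (S − μ_NLoS)/(μ_LoS − μ_NLoS) with P_LoS(θ) = b₁((180/π)θ − ζ)^{b₂}, θ(h) = arcsin(h/d), and μ_LoS < μ_NLoS, b₁, b₂ > 0, then (180/π)·arcsin(h/d) − ζ ≥ e^M where M = ln( ((S/(μ_LoS−μ_NLoS)) − μ_NLoS/(μ_LoS−μ_NLoS)) / b₁ ) / b₂, provided the argument of ln is positive; consequently h ≥ d·sin((π/180)(ζ + e^M)). -/

import Mathlib

open Real Set

theorem exp_log_div_le_iff {X A b : ℝ} (hX : 0 < X) (hA : 0 < A) (hb : 0 < b) :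
    exp (log X / b) ≤ A ↔ X ≤ A ^ b := by
  rw [← le_log_iff_exp_le hA, div_le_iff₀ hb, mul_comm, ← log_rpow hA,
    log_le_log_iff hX (rpow_pos_of_pos hA b)]

theorem mul_sin_le_of_le_arcsin {x h d : ℝ} (hd : 0 < d) (hx : x ∈ Ioc (-(π / 2)) (π / 2))
    (hxh : x ≤ arcsin (h / d)) : d * sin x ≤ h := by
  have hsin := (le_arcsin_iff_sin_le' hx).1 hxh
  rwa [le_div_iff₀ hd, mul_comm] at hsin

theorem altitude_lower_bound_general
    (h d S b₁ b₂ ζ μ_LoS μ_NLoS M : ℝ)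
    (hd : 0 < d)
    (hb₁ : 0 < b₁) (hb₂ : 0 < b₂)
    (hargpos : 0 < (S / (μ_LoS - μ_NLoS) - μ_NLoS / (μ_LoS - μ_NLoS)) / b₁)
    (hM : M = Real.log ((S / (μ_LoS - μ_NLoS) - μ_NLoS / (μ_LoS - μ_NLoS)) / b₁) / b₂)
    (hangpos : 0 < (180 / Real.pi) * Real.arcsin (h / d) - ζ)
    (hrange0 : 0 ≤ (Real.pi / 180) * (ζ + Real.exp M))
    (hrange1 : (Real.pi / 180) * (ζ + Real.exp M) ≤ Real.pi / 2)
    (hP : b₁ * ((180 / Real.pi) * Real.arcsin (h / d) - ζ) ^ b₂ ≥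
        (S - μ_NLoS) / (μ_LoS - μ_NLoS)) :
    (180 / Real.pi) * Real.arcsin (h / d) - ζ ≥ Real.exp M ∧
    h ≥ d * Real.sin ((Real.pi / 180) * (ζ + Real.exp M)) := by
  set X := (S / (μ_LoS - μ_NLoS) - μ_NLoS / (μ_LoS - μ_NLoS)) / b₁
  have hthreshold : (S - μ_NLoS) / (μ_LoS - μ_NLoS) = b₁ * X := by
    rw [sub_div, mul_div_cancel₀ _ hb₁.ne']
  have hX : X ≤ ((180 / π) * arcsin (h / d) - ζ) ^ b₂ :=
    le_of_mul_le_mul_left (hthreshold ▸ hP) hb₁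
  have hangle : exp M ≤ (180 / π) * arcsin (h / d) - ζ :=
    hM ▸ (exp_log_div_le_iff hargpos hangpos hb₂).2 hX
  refine ⟨hangle, mul_sin_le_of_le_arcsin hd ⟨by linarith [pi_pos], hrange1⟩ ?_⟩
  calc (π / 180) * (ζ + exp M) ≤ (π / 180) * ((180 / π) * arcsin (h / d)) := by
        gcongr; linarith
    _ = arcsin (h / d) := by field_simp

theorem altitude_lower_bound
    (h d S b₁ b₂ ζ μ_LoS μ_NLoS M : ℝ)
    (hd : 0 < d) (hh0 : 0 ≤ h) (hhd : h ≤ d)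
    (hb₁ : 0 < b₁) (hb₂ : 0 < b₂) (hζ : 0 ≤ ζ)
    (hμ : μ_LoS < μ_NLoS)
    (hargpos : 0 < (S / (μ_LoS - μ_NLoS) - μ_NLoS / (μ_LoS - μ_NLoS)) / b₁)
    (hM : M = Real.log ((S / (μ_LoS - μ_NLoS) - μ_NLoS / (μ_LoS - μ_NLoS)) / b₁) / b₂)
    (hangpos : 0 < (180 / Real.pi) * Real.arcsin (h / d) - ζ)
    (hrange0 : 0 ≤ (Real.pi / 180) * (ζ + Real.exp M))
    (hrange1 : (Real.pi / 180) * (ζ + Real.exp M) ≤ Real.pi / 2)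
    (hP : b₁ * ((180 / Real.pi) * Real.arcsin (h / d) - ζ) ^ b₂ ≥
        (S - μ_NLoS) / (μ_LoS - μ_NLoS)) :
    (180 / Real.pi) * Real.arcsin (h / d) - ζ ≥ Real.exp M ∧
    h ≥ d * Real.sin ((Real.pi / 180) * (ζ + Real.exp M)) :=
  altitude_lower_bound_general h d S b₁ b₂ ζ μ_LoS μ_NLoS M hd hb₁ hb₂ hargpos hM hangpos hrange0
    hrange1 hP
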